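/- For the transformed code C_1(n,k,η,t) with mixing coefficients satisfying e_j ∉ {0, 1} for all j = 1,…,η, every one of the first t·η nodes has optimal repair access: for each node index m with 1 ≤ m ≤ t·η, there exist d distinct helper node indices h_1,…,h_d ∈ {1,…,n}∖{m}, a choice of exactly one of the t stored symbols of each helper node, and a reconstruction function φ : F^d → F^t, such that for every message array s ∈ F^{t×k}, applying φ to the d accessed symbols yields exactly the t symbols stored in node m. In particular the total repair access is d = d·α/(d−k+1) symbols with α = t, matching the minimum repair bandwidth. -/
import Mathlib


/-- The codeword symbol `c_h = (s · G)_h` of the underlying `(n,k)` MDS code. -/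
noncomputable def codewordSym {F : Type*} [Field F] {n k : ℕ}
    (G : Matrix (Fin k) (Fin n) F) (s : Fin k → F) (h : Fin n) : F :=
  ∑ i : Fin k, s i * G i h

/-- The symbol stored in row `ℓ` of node `m` of the transformed code `C₁(n,k,η,t)`:
for `m` among the first `η·t` nodes, with group index `j = ⌊m/t⌋`, in-group index
`i = m mod t` and companion node `⌊m/t⌋·t + ℓ`, the stored symbol is
`c^ℓ_m + c^i_{comp}` if `ℓ < i`, `c^i_m` if `ℓ = i`, and `c^ℓ_m + e_j·c^i_{comp}` if
`ℓ > i`; the remaining nodes `m ≥ η·t` store the plain codeword symbols `c^ℓ_m`.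
(Node and row indices are 0-based.) -/
noncomputable def storedC1 {F : Type*} [Field F] {n k : ℕ} (t η : ℕ) (ht : 0 < t)
    (hηt : η * t ≤ n) (G : Matrix (Fin k) (Fin n) F) (e : Fin η → F)
    (s : Fin t → Fin k → F) (m : Fin n) (ℓ : Fin t) : F :=
  if hm : (m : ℕ) < η * t then
    have hj : (m : ℕ) / t < η := by
      by_contra hcon
      push_neg at hcon
      have h1 : η * t ≤ (m : ℕ) / t * t := Nat.mul_le_mul_right t hcon
      have h2 : (m : ℕ) / t * t ≤ (m : ℕ) := Nat.div_mul_le_self _ _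
      omega
    have hcomp : (m : ℕ) / t * t + (ℓ : ℕ) < n := by
      have h3 : ((m : ℕ) / t + 1) * t ≤ η * t := Nat.mul_le_mul_right t hj
      have h4 : (m : ℕ) / t * t + t = ((m : ℕ) / t + 1) * t := by ring
      have h5 := ℓ.isLt
      omega
    have hi : (m : ℕ) % t < t := Nat.mod_lt _ ht
    let comp : Fin n := ⟨(m : ℕ) / t * t + (ℓ : ℕ), hcomp⟩
    if (ℓ : ℕ) < (m : ℕ) % t then
      codewordSym G (s ℓ) m + codewordSym G (s ⟨(m : ℕ) % t, hi⟩) comp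
    else if (ℓ : ℕ) = (m : ℕ) % t then
      codewordSym G (s ℓ) m
    else
      codewordSym G (s ℓ) m + e ⟨(m : ℕ) / t, hj⟩ * codewordSym G (s ⟨(m : ℕ) % t, hi⟩) comp
  else codewordSym G (s ℓ) m

/-- Position of the `b`-th "clean" helper node. -/
def pfAux (η j t i b : ℕ) : ℕ :=
  if b < η - 1 then (if b < j then b else b + 1) * t + i else η * t + (b - (η - 1))

/-- Position of the `a`-th helper node. -/
def hfAux (t i j : ℕ) (pf : ℕ → ℕ) (a : ℕ) : ℕ :=
  if a < t - 1 then j * t + (if a < i then a else a + 1) else pf (a - (t - 1))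

lemma grp_mod_div {t : ℕ} (ht : 0 < t) (g u : ℕ) (hu : u < t) :
    (g * t + u) % t = u ∧ (g * t + u) / t = g := by
  constructor
  · rw [add_comm, Nat.add_mul_mod_self_right, Nat.mod_eq_of_lt hu]
  · rw [add_comm, Nat.add_mul_div_right _ _ ht, Nat.div_eq_of_lt hu, zero_add]

section eval
variable {F : Type*} [Field F] {n k : ℕ} (t η : ℕ) (ht : 0 < t) (hηt : η * t ≤ n)
  (G : Matrix (Fin k) (Fin n) F) (e : Fin η → F) (s : Fin t → Fin k → F)

lemma storedC1_plain (w : Fin n) (hw : η * t ≤ (w : ℕ)) (ℓ : Fin t) :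
    storedC1 t η ht hηt G e s w ℓ = codewordSym G (s ℓ) w := by
  rw [storedC1, dif_neg (by omega)]

lemma storedC1_diag (w : Fin n) (hw : (w : ℕ) < η * t) (ℓ : Fin t)
    (hℓ : (ℓ : ℕ) = (w : ℕ) % t) :
    storedC1 t η ht hηt G e s w ℓ = codewordSym G (s ℓ) w := by
  rw [storedC1, dif_pos hw]
  simp only
  rw [if_neg (by omega), if_pos hℓ]

lemma storedC1_lt (w : Fin n) (hw : (w : ℕ) < η * t) (ℓ : Fin t)
    (hℓ : (ℓ : ℕ) < (w : ℕ) % t) (u : Fin t) (hu : (u : ℕ) = (w : ℕ) % t)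
    (comp : Fin n) (hcomp : (comp : ℕ) = (w : ℕ) / t * t + (ℓ : ℕ)) :
    storedC1 t η ht hηt G e s w ℓ = codewordSym G (s ℓ) w + codewordSym G (s u) comp := by
  rw [storedC1, dif_pos hw]
  simp only
  rw [if_pos hℓ]
  have h1 : u = ⟨(w : ℕ) % t, Nat.mod_lt _ ht⟩ := Fin.ext hu
  have h2 : comp = ⟨(w : ℕ) / t * t + (ℓ : ℕ), hcomp ▸ comp.isLt⟩ := Fin.ext hcomp
  rw [h1, h2]

lemma storedC1_gt (w : Fin n) (hw : (w : ℕ) < η * t) (ℓ : Fin t)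
    (hℓ : (w : ℕ) % t < (ℓ : ℕ)) (u : Fin t) (hu : (u : ℕ) = (w : ℕ) % t)
    (jj : Fin η) (hjj : (jj : ℕ) = (w : ℕ) / t)
    (comp : Fin n) (hcomp : (comp : ℕ) = (w : ℕ) / t * t + (ℓ : ℕ)) :
    storedC1 t η ht hηt G e s w ℓ
      = codewordSym G (s ℓ) w + e jj * codewordSym G (s u) comp := by
  rw [storedC1, dif_pos hw]
  simp only
  rw [if_neg (by omega), if_neg (by omega)]
  have h1 : u = ⟨(w : ℕ) % t, Nat.mod_lt _ ht⟩ := Fin.ext hu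
  have h2 : comp = ⟨(w : ℕ) / t * t + (ℓ : ℕ), hcomp ▸ comp.isLt⟩ := Fin.ext hcomp
  have h3 : jj = ⟨(w : ℕ) / t, hjj ▸ jj.isLt⟩ := Fin.ext hjj
  rw [h1, h2, h3]

end eval

/-- Theorem 3 of the paper: each of the first `t·η` nodes of the transformed code
`C₁(n,k,η,t)` (with mixing coefficients `e_j ∉ {0,1}`) has optimal repair access:
there are `d` distinct helper nodes (none equal to the failed node), one accessed
symbol per helper node, and a reconstruction function recovering, for every message
array, the `t` symbols of the failed node from the `d` accessed symbols. The total
repair access `d = d·α/(d−k+1)` with `α = t` matches the minimum repair bandwidth. -/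
theorem stmt_6 {F : Type*} [Field F] (n k d : ℕ) (hk : 1 ≤ k) (hd1 : k + 1 ≤ d)
    (hd2 : d + 1 ≤ n) (t η : ℕ) (htdef : t = d - k + 1) (hηdef : η = (n - k - 1) / (d - k))
    (ht : 0 < t) (hηt : η * t ≤ n)
    (G : Matrix (Fin k) (Fin n) F)
    (hMDS : ∀ cols : Fin k → Fin n, Function.Injective cols →
      IsUnit (Matrix.of fun i j : Fin k => G i (cols j)).det)
    (e : Fin η → F) (he : ∀ j, e j ≠ 0 ∧ e j ≠ 1)
    (m : Fin n) (hm : (m : ℕ) < t * η) :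
    ∃ h : Fin d → Fin n, Function.Injective h ∧ (∀ a, h a ≠ m) ∧
      ∃ (row : Fin d → Fin t) (φ : (Fin d → F) → Fin t → F),
        ∀ s : Fin t → Fin k → F,
          φ (fun a => storedC1 t η ht hηt G e s (h a) (row a)) =
            fun ℓ => storedC1 t η ht hηt G e s m ℓ := by
  classical
  have hmη : (m : ℕ) < η * t := by rwa [mul_comm] at hm
  have hi : (m : ℕ) % t < t := Nat.mod_lt _ ht
  have hj : (m : ℕ) / t < η := (Nat.div_lt_iff_lt_mul ht).2 hmη
  set i := (m : ℕ) % t with hidef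
  set j := (m : ℕ) / t with hjdef
  have hη1 : 1 ≤ η := Nat.lt_of_le_of_lt (Nat.zero_le j) hj
  have hmsplit : j * t + i = (m : ℕ) := by
    rw [add_comm]; exact Nat.mod_add_div' (m : ℕ) t
  have hdt : t - 1 + k = d := by omega
  have hηb : η * (d - k) ≤ n - k - 1 := hηdef ▸ Nat.div_mul_le_self _ _
  have hηt2 : η * t = η * (d - k) + η := by rw [htdef, Nat.mul_add, Nat.mul_one]
  have hcount : η * t + k + 1 ≤ n + η := by omega
  have hjtt : j * t + t ≤ η * t := by
    have h1 : j * t + t = (j + 1) * t := by ring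
    have h2 : (j + 1) * t ≤ η * t := Nat.mul_le_mul_right t hj
    omega
  have hgrp_lt : ∀ g : ℕ, g < η → g * t + i < η * t := by
    intro g hg
    have h1 : g * t + t = (g + 1) * t := by ring
    have h2 : (g + 1) * t ≤ η * t := Nat.mul_le_mul_right t hg
    omega
  have hpf_lt : ∀ b : ℕ, b < k → pfAux η j t i b < n := by
    intro b hb
    unfold pfAux
    split
    · refine lt_of_lt_of_le (hgrp_lt _ ?_) hηt
      split <;> omega
    · omega
  have hhf_lt : ∀ a : ℕ, a < d → hfAux t i j (pfAux η j t i) a < n := by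
    intro a ha
    unfold hfAux
    split
    · have h1 : (if a < i then a else a + 1) < t := by split <;> omega
      omega
    · exact hpf_lt _ (by omega)
  set p : Fin k → Fin n := fun b => ⟨pfAux η j t i (b : ℕ), hpf_lt _ b.isLt⟩ with hpdef
  set hmap : Fin d → Fin n := fun a => ⟨hfAux t i j (pfAux η j t i) (a : ℕ), hhf_lt _ a.isLt⟩
    with hhdef
  have hpf1 : ∀ b : ℕ, b < η - 1 →
      pfAux η j t i b = (if b < j then b else b + 1) * t + i := by
    intro b hb; unfold pfAux; rw [if_pos hb]
  have hpf2 : ∀ b : ℕ, ¬ b < η - 1 → pfAux η j t i b = η * t + (b - (η - 1)) := by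
    intro b hb; unfold pfAux; rw [if_neg hb]
  have hhf1 : ∀ a : ℕ, a < t - 1 →
      hfAux t i j (pfAux η j t i) a = j * t + (if a < i then a else a + 1) := by
    intro a ha; unfold hfAux; rw [if_pos ha]
  have hhf2 : ∀ a : ℕ, ¬ a < t - 1 →
      hfAux t i j (pfAux η j t i) a = pfAux η j t i (a - (t - 1)) := by
    intro a ha; unfold hfAux; rw [if_neg ha]
  -- injectivity of pfAux on [0,k)
  have hpfinj : ∀ b1 b2 : ℕ, b1 < k → b2 < k →
      pfAux η j t i b1 = pfAux η j t i b2 → b1 = b2 := by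
    intro b1 b2 hb1 hb2 hv
    by_cases h1 : b1 < η - 1 <;> by_cases h2 : b2 < η - 1
    · rw [hpf1 _ h1, hpf1 _ h2] at hv
      have h3 : (if b1 < j then b1 else b1 + 1) * t = (if b2 < j then b2 else b2 + 1) * t := by
        omega
      have h4 := Nat.eq_of_mul_eq_mul_right ht h3
      split at h4 <;> split at h4 <;> omega
    · exfalso
      rw [hpf1 _ h1, hpf2 _ h2] at hv
      have h3 := hgrp_lt (if b1 < j then b1 else b1 + 1) (by split <;> omega)
      omega
    · exfalso
      rw [hpf2 _ h1, hpf1 _ h2] at hv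
      have h3 := hgrp_lt (if b2 < j then b2 else b2 + 1) (by split <;> omega)
      omega
    · rw [hpf2 _ h1, hpf2 _ h2] at hv
      omega
  have hpinj : Function.Injective p := by
    intro b1 b2 hb
    exact Fin.ext (hpfinj _ _ b1.isLt b2.isLt (congrArg Fin.val hb))
  -- pfAux never equals m, and mod-t facts
  have hpne : ∀ b : ℕ, b < k → pfAux η j t i b ≠ (m : ℕ) := by
    intro b hb hv
    by_cases h1 : b < η - 1
    · rw [hpf1 _ h1] at hv
      have hg : (if b < j then b else b + 1) < η := by split <;> omega
      have hgj : (if b < j then b else b + 1) ≠ j := by split <;> omega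
      have d1 := (grp_mod_div ht (if b < j then b else b + 1) i hi).2
      have d2 := (grp_mod_div ht j i hi).2
      rw [hv, ← hmsplit] at d1
      omega
    · rw [hpf2 _ h1] at hv
      omega
  -- injectivity of hmap
  have hhinj : Function.Injective hmap := by
    intro a1 a2 ha
    have hv : hfAux t i j (pfAux η j t i) (a1 : ℕ) = hfAux t i j (pfAux η j t i) (a2 : ℕ) :=
      congrArg Fin.val ha
    have hmix : ∀ a b : ℕ, a < t - 1 → b < k →
        j * t + (if a < i then a else a + 1) ≠ pfAux η j t i b := by
      intro a b ha hb hv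
      have hu : (if a < i then a else a + 1) < t := by split <;> omega
      by_cases h2 : b < η - 1
      · rw [hpf1 _ h2] at hv
        have hg : (if b < j then b else b + 1) < η := by split <;> omega
        have hgj : (if b < j then b else b + 1) ≠ j := by split <;> omega
        have d1 := (grp_mod_div ht j (if a < i then a else a + 1) hu).2
        have d2 := (grp_mod_div ht (if b < j then b else b + 1) i hi).2
        rw [hv] at d1
        omega
      · rw [hpf2 _ h2] at hv
        omega
    by_cases h1 : (a1 : ℕ) < t - 1 <;> by_cases h2 : (a2 : ℕ) < t - 1
    · rw [hhf1 _ h1, hhf1 _ h2] at hv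
      apply Fin.ext
      split at hv <;> split at hv <;> omega
    · exfalso
      rw [hhf1 _ h1, hhf2 _ h2] at hv
      exact hmix _ _ h1 (by omega) hv
    · exfalso
      rw [hhf1 _ h2, hhf2 _ h1] at hv
      exact hmix _ _ h2 (by omega) hv.symm
    · rw [hhf2 _ h1, hhf2 _ h2] at hv
      have := hpfinj _ _ (by omega) (by omega) hv
      apply Fin.ext
      omega
  -- hmap avoids m
  have hne : ∀ a, hmap a ≠ m := by
    intro a ha
    have hv : hfAux t i j (pfAux η j t i) (a : ℕ) = (m : ℕ) := congrArg Fin.val ha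
    by_cases h1 : (a : ℕ) < t - 1
    · rw [hhf1 _ h1] at hv
      rw [← hmsplit] at hv
      split at hv <;> omega
    · rw [hhf2 _ h1] at hv
      exact hpne _ (by omega) hv
  -- stored symbol at clean positions
  have hstored_p : ∀ (s0 : Fin t → Fin k → F) (b : Fin k),
      storedC1 t η ht hηt G e s0 (p b) ⟨i, hi⟩ = codewordSym G (s0 ⟨i, hi⟩) (p b) := by
    intro s0 b
    have hval : ((p b : Fin n) : ℕ) = pfAux η j t i (b : ℕ) := rfl
    by_cases hb : (b : ℕ) < η - 1
    · have hg : (if (b : ℕ) < j then (b : ℕ) else (b : ℕ) + 1) < η := by split <;> omega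
      refine storedC1_diag t η ht hηt G e s0 (p b) ?_ _ ?_
      · rw [hval, hpf1 _ hb]; exact hgrp_lt _ hg
      · rw [hval, hpf1 _ hb, (grp_mod_div ht _ _ hi).1]
    · refine storedC1_plain t η ht hηt G e s0 (p b) ?_ _
      rw [hval, hpf2 _ hb]
      omega
  -- MDS: row i is determined by clean positions
  have hsame : ∀ s s' : Fin t → Fin k → F,
      (∀ b : Fin k, codewordSym G (s ⟨i, hi⟩) (p b) = codewordSym G (s' ⟨i, hi⟩) (p b)) →
      s ⟨i, hi⟩ = s' ⟨i, hi⟩ := by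
    intro s s' hbb
    set M : Matrix (Fin k) (Fin k) F := Matrix.of fun w b : Fin k => G w (p b) with hM
    have hdet : IsUnit M.det := hMDS p hpinj
    set δ : Fin k → F := fun w => s ⟨i, hi⟩ w - s' ⟨i, hi⟩ w with hδ
    have hvm : Matrix.vecMul δ M = 0 := by
      funext b
      have hb := hbb b
      simp only [codewordSym] at hb
      simp only [Matrix.vecMul, dotProduct, hδ, hM, Matrix.of_apply, sub_mul,
        Pi.zero_apply]
      rw [Finset.sum_sub_distrib, sub_eq_zero]
      exact hb
    have h0 : δ = 0 := by
      have h1 : Matrix.vecMul (Matrix.vecMul δ M) M⁻¹ = 0 := by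
        rw [hvm, Matrix.zero_vecMul]
      rwa [Matrix.vecMul_vecMul, Matrix.mul_nonsing_inv M hdet, Matrix.vecMul_one] at h1
    funext w
    have h2 := congrFun h0 w
    simp only [hδ, Pi.zero_apply] at h2
    exact sub_eq_zero.mp h2
  -- determination of the lost node's content
  have key : ∀ s s' : Fin t → Fin k → F,
      (∀ a : Fin d, storedC1 t η ht hηt G e s (hmap a) ⟨i, hi⟩
        = storedC1 t η ht hηt G e s' (hmap a) ⟨i, hi⟩) →
      ∀ ℓ : Fin t, storedC1 t η ht hηt G e s m ℓ = storedC1 t η ht hηt G e s' m ℓ := by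
    intro s s' hacc
    have hrowi : s ⟨i, hi⟩ = s' ⟨i, hi⟩ := by
      apply hsame
      intro b
      have hb : t - 1 + (b : ℕ) < d := by omega
      have h1 := hacc ⟨t - 1 + (b : ℕ), hb⟩
      have h2 : hmap ⟨t - 1 + (b : ℕ), hb⟩ = p b := by
        apply Fin.ext
        show hfAux t i j (pfAux η j t i) (t - 1 + (b : ℕ)) = pfAux η j t i (b : ℕ)
        rw [hhf2 _ (by omega)]
        congr 1
        omega
      rw [h2, hstored_p, hstored_p] at h1
      exact h1
    have hcw : ∀ w : Fin n, codewordSym G (s ⟨i, hi⟩) w = codewordSym G (s' ⟨i, hi⟩) w := by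
      intro w; rw [hrowi]
    have hcu : ∀ u : Fin t, (u : ℕ) ≠ i →
        codewordSym G (s u) m = codewordSym G (s' u) m := by
      intro u hu
      rcases lt_or_gt_of_ne hu with hui | hui
      · -- u < i : helper node j*t+u, row i, gt branch
        have hau : (u : ℕ) < d := by omega
        have ha := hacc ⟨(u : ℕ), hau⟩
        have hnode : ((hmap ⟨(u : ℕ), hau⟩ : Fin n) : ℕ) = j * t + (u : ℕ) := by
          show hfAux t i j (pfAux η j t i) (u : ℕ) = _
          rw [hhf1 _ (by omega), if_pos hui]
        set w := hmap ⟨(u : ℕ), hau⟩ with hwdef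
        have hwm : (w : ℕ) % t = (u : ℕ) := by
          rw [hnode]; exact (grp_mod_div ht j _ u.isLt).1
        have hwd : (w : ℕ) / t = j := by
          rw [hnode]; exact (grp_mod_div ht j _ u.isLt).2
        have hwlt : (w : ℕ) < η * t := by
          have := u.isLt; omega
        rw [storedC1_gt t η ht hηt G e s w hwlt ⟨i, hi⟩ (by show (w : ℕ) % t < i; omega)
              u (by omega) ⟨j, hj⟩ (by show j = (w : ℕ) / t; omega)
              m (by show (m : ℕ) = (w : ℕ) / t * t + i; rw [hwd]; omega),
            storedC1_gt t η ht hηt G e s' w hwlt ⟨i, hi⟩ (by show (w : ℕ) % t < i; omega)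
              u (by omega) ⟨j, hj⟩ (by show j = (w : ℕ) / t; omega)
              m (by show (m : ℕ) = (w : ℕ) / t * t + i; rw [hwd]; omega), hcw w] at ha
        have h3 := add_left_cancel ha
        exact mul_left_cancel₀ (he ⟨j, hj⟩).1 h3
      · -- u > i : helper node j*t+u, row i, lt branch
        have hau : (u : ℕ) - 1 < d := by omega
        have ha := hacc ⟨(u : ℕ) - 1, hau⟩
        have hnode : ((hmap ⟨(u : ℕ) - 1, hau⟩ : Fin n) : ℕ) = j * t + (u : ℕ) := by
          show hfAux t i j (pfAux η j t i) ((u : ℕ) - 1) = _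
          rw [hhf1 _ (by omega), if_neg (by omega)]
          omega
        set w := hmap ⟨(u : ℕ) - 1, hau⟩ with hwdef
        have hwm : (w : ℕ) % t = (u : ℕ) := by
          rw [hnode]; exact (grp_mod_div ht j _ u.isLt).1
        have hwd : (w : ℕ) / t = j := by
          rw [hnode]; exact (grp_mod_div ht j _ u.isLt).2
        have hwlt : (w : ℕ) < η * t := by
          have := u.isLt; omega
        rw [storedC1_lt t η ht hηt G e s w hwlt ⟨i, hi⟩ (by show i < (w : ℕ) % t; omega)
              u (by omega)
              m (by show (m : ℕ) = (w : ℕ) / t * t + i; rw [hwd]; omega),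
            storedC1_lt t η ht hηt G e s' w hwlt ⟨i, hi⟩ (by show i < (w : ℕ) % t; omega)
              u (by omega)
              m (by show (m : ℕ) = (w : ℕ) / t * t + i; rw [hwd]; omega), hcw w] at ha
        exact add_left_cancel ha
    intro u
    rcases lt_trichotomy ((u : ℕ)) i with hui | hui | hui
    · have hcompn : j * t + (u : ℕ) < n := by
        have := u.isLt; omega
      rw [storedC1_lt t η ht hηt G e s m hmη u (by omega) ⟨i, hi⟩
            (by show i = (m : ℕ) % t; omega)
            ⟨j * t + (u : ℕ), hcompn⟩
            (by show j * t + (u : ℕ) = (m : ℕ) / t * t + (u : ℕ); rw [← hjdef]),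
          storedC1_lt t η ht hηt G e s' m hmη u (by omega) ⟨i, hi⟩
            (by show i = (m : ℕ) % t; omega)
            ⟨j * t + (u : ℕ), hcompn⟩
            (by show j * t + (u : ℕ) = (m : ℕ) / t * t + (u : ℕ); rw [← hjdef]),
          hcu u (by omega), hcw]
    · have h4 : u = ⟨i, hi⟩ := Fin.ext hui
      rw [storedC1_diag t η ht hηt G e s m hmη u (by omega),
          storedC1_diag t η ht hηt G e s' m hmη u (by omega), h4, hcw]
    · have hcompn : j * t + (u : ℕ) < n := by
        have := u.isLt; omega
      rw [storedC1_gt t η ht hηt G e s m hmη u (by omega) ⟨i, hi⟩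
            (by show i = (m : ℕ) % t; omega)
            ⟨j, hj⟩ (by show j = (m : ℕ) / t; omega) ⟨j * t + (u : ℕ), hcompn⟩
            (by show j * t + (u : ℕ) = (m : ℕ) / t * t + (u : ℕ); rw [← hjdef]),
          storedC1_gt t η ht hηt G e s' m hmη u (by omega) ⟨i, hi⟩
            (by show i = (m : ℕ) % t; omega)
            ⟨j, hj⟩ (by show j = (m : ℕ) / t; omega) ⟨j * t + (u : ℕ), hcompn⟩
            (by show j * t + (u : ℕ) = (m : ℕ) / t * t + (u : ℕ); rw [← hjdef]),
          hcu u (by omega), hcw]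
  -- assemble
  refine ⟨hmap, hhinj, hne, fun _ => ⟨i, hi⟩, fun v =>
    if hv : ∃ s0 : Fin t → Fin k → F,
        (fun a => storedC1 t η ht hηt G e s0 (hmap a) ⟨i, hi⟩) = v
    then fun ℓ => storedC1 t η ht hηt G e (Classical.choose hv) m ℓ
    else fun _ => 0, ?_⟩
  intro s
  beta_reduce
  split
  next hv =>
    funext ℓ
    exact key _ s (fun a => congrFun (Classical.choose_spec hv) a) ℓ
  next hv =>
    exact absurd ⟨s, rfl⟩ hv
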